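/- arXiv:1302.4270 — 5 statements merged into one kernel-verified Lean document; each statement's English description precedes it below -/
import Mathlib

section
/- An idempotent p in a compact Hausdorff right topological semigroup T is minimal with respect to the order p ≤ q iff pq = qp = p, if and only if p belongs to the smallest ideal K(T). -/
variable {T : Type*}

/-- `I` is a left ideal of the semigroup `T`. -/
def IsLI [Semigroup T] (I : Set T) : Prop :=
  I.Nonempty ∧ ∀ p ∈ I, ∀ q : T, q * p ∈ I

theorem exists_minimal_left_ideal [Semigroup T] [TopologicalSpace T]
    [CompactSpace T] [T2Space T] (hright : ∀ p : T, Continuous fun q : T => q * p)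
    (C : Set T) (hCne : C.Nonempty) (hCli : ∀ p ∈ C, ∀ q : T, q * p ∈ C)
    (hCc : IsCompact C) :
    ∃ L, L ⊆ C ∧ IsLI L ∧ IsCompact L ∧ ∀ J : Set T, IsLI J → J ⊆ L → J = L := by
  classical
  set S : Set (Set T) := {I | IsLI I ∧ IsClosed I ∧ I ⊆ C} with hS
  have hCS : C ∈ S := ⟨⟨hCne, hCli⟩, hCc.isClosed, subset_rfl⟩
  have hzorn : ∀ c ⊆ S, IsChain (· ⊆ ·) c → c.Nonempty → ∃ lb ∈ S, ∀ s ∈ c, lb ⊆ s := by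
    intro c hcS hchain hcne
    refine ⟨⋂₀ c, ⟨⟨?_, ?_⟩, ?_, ?_⟩, fun s hs => Set.sInter_subset_of_mem hs⟩
    · haveI : Nonempty c := hcne.to_subtype
      have hdir : DirectedOn (· ⊇ ·) c := fun a ha b hb =>
        (hchain.total ha hb).elim (fun h => ⟨a, ha, subset_rfl, h⟩)
          (fun h => ⟨b, hb, h, subset_rfl⟩)
      exact IsCompact.nonempty_sInter_of_directed_nonempty_isCompact_isClosed
        hdir (fun U hU => (hcS hU).1.1)
        (fun U hU => (hcS hU).2.1.isCompact) (fun U hU => (hcS hU).2.1)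
    · intro x hx q
      exact Set.mem_sInter.mpr fun I hI => (hcS hI).1.2 x (Set.mem_sInter.mp hx I hI) q
    · exact isClosed_sInter fun I hI => (hcS hI).2.1
    · obtain ⟨I, hI⟩ := hcne
      exact (Set.sInter_subset_of_mem hI).trans (hcS hI).2.2
  obtain ⟨m, hmC, hmmin'⟩ := zorn_superset_nonempty S hzorn C hCS
  have hmS : m ∈ S := hmmin'.prop
  have hmmin : ∀ J ∈ S, J ⊆ m → J = m :=
    fun J hJ hJm => subset_antisymm hJm (hmmin'.le_of_le hJ hJm)
  have hmc : IsCompact m := hmS.2.1.isCompact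
  refine ⟨m, hmC, hmS.1, hmc, fun J hJ hJm => ?_⟩
  obtain ⟨x, hx⟩ := hJ.1
  have hTx : ((fun q : T => q * x) '' Set.univ) ∈ S := by
    refine ⟨⟨⟨x * x, ⟨x, Set.mem_univ _, rfl⟩⟩, ?_⟩, ?_, ?_⟩
    · rintro _ ⟨t, -, rfl⟩ q
      exact ⟨q * t, Set.mem_univ _, mul_assoc q t x⟩
    · exact (isCompact_univ.image (hright x)).isClosed
    · rintro _ ⟨t, -, rfl⟩
      exact hmC (hmS.1.2 x (hJm hx) t)
  have hsub : ((fun q : T => q * x) '' Set.univ) ⊆ J := by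
    rintro _ ⟨t, -, rfl⟩; exact hJ.2 x hx t
  have := hmmin _ hTx (hsub.trans hJm)
  exact subset_antisymm hJm (this ▸ hsub)

theorem min_left_ideal_smul [Semigroup T] (L : Set T) (hL : IsLI L)
    (hLmin : ∀ J : Set T, IsLI J → J ⊆ L → J = L) (s : T) :
    IsLI ((fun x : T => x * s) '' L) ∧
      ∀ J : Set T, IsLI J → J ⊆ (fun x : T => x * s) '' L → J = (fun x : T => x * s) '' L := by
  have hLs : IsLI ((fun x : T => x * s) '' L) := by
    refine ⟨hL.1.image _, ?_⟩
    rintro _ ⟨l, hl, rfl⟩ q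
    exact ⟨q * l, hL.2 l hl q, mul_assoc q l s⟩
  refine ⟨hLs, fun J hJ hJL => subset_antisymm hJL ?_⟩
  obtain ⟨a, ha⟩ := hJ.1
  obtain ⟨l, hl, rfl⟩ := hJL ha
  have hL' : IsLI {x | x ∈ L ∧ x * s ∈ J} := by
    refine ⟨⟨l, hl, ha⟩, ?_⟩
    rintro x ⟨hxL, hxJ⟩ q
    exact ⟨hL.2 x hxL q, by rw [mul_assoc]; exact hJ.2 _ hxJ q⟩
  have := hLmin _ hL' fun x hx => hx.1
  rintro _ ⟨y, hy, rfl⟩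
  have hy2 : y ∈ {x | x ∈ L ∧ x * s ∈ J} := by rw [this]; exact hy
  exact hy2.2

/-- `I` is a two-sided ideal of the semigroup `T`. -/
def IsTwoSidedIdeal [Semigroup T] (I : Set T) : Prop :=
  I.Nonempty ∧ ∀ p ∈ I, ∀ q : T, q * p ∈ I ∧ p * q ∈ I

/-- An idempotent `p` in a compact Hausdorff right topological semigroup is minimal with
respect to the order `q ≤ p ↔ qp = pq = q` (on idempotents) if and only if `p` lies in the
smallest two-sided ideal `K`. -/
theorem idempotent_minimal_iff_mem_smallest_ideal [Semigroup T] [TopologicalSpace T]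
    [CompactSpace T] [T2Space T] (hright : ∀ p : T, Continuous fun q : T => q * p)
    (K : Set T) (hK : IsTwoSidedIdeal K ∧ ∀ I : Set T, IsTwoSidedIdeal I → K ⊆ I)
    (p : T) (hp : p * p = p) :
    (∀ q : T, q * q = q → q * p = q → p * q = q → q = p) ↔ p ∈ K := by
  obtain ⟨⟨hKne, hKid⟩, hKmin⟩ := hK
  -- the compact left ideal Tp
  set C : Set T := (fun q : T => q * p) '' Set.univ with hC
  have hCne : C.Nonempty := ⟨p * p, p, Set.mem_univ _, rfl⟩
  have hCli : ∀ x ∈ C, ∀ q : T, q * x ∈ C := by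
    rintro _ ⟨t, -, rfl⟩ q
    exact ⟨q * t, Set.mem_univ _, mul_assoc q t p⟩
  have hCc : IsCompact C := isCompact_univ.image (hright p)
  obtain ⟨L, hLC, hLli, hLc, hLmin⟩ :=
    exists_minimal_left_ideal hright C hCne hCli hCc
  constructor
  · -- minimal ⟹ p ∈ K
    intro hmin
    -- L is a subsemigroup, so contains an idempotent e
    obtain ⟨e, heL, he⟩ := exists_idempotent_in_compact_subsemigroup hright L hLli.1 hLc
      (fun x hx y hy => hLli.2 y hy x)
    have hep : e * p = e := by
      obtain ⟨t, -, rfl⟩ := hLC heL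
      rw [mul_assoc, hp]
    have h1 : (p * e) * (p * e) = p * e := by
      rw [mul_assoc, ← mul_assoc e p e, hep, he]
    have h2 : (p * e) * p = p * e := by rw [mul_assoc, hep]
    have h3 : p * (p * e) = p * e := by rw [← mul_assoc, hp]
    have hpe : p * e = p := hmin _ h1 h2 h3
    have hpL : p ∈ L := hpe ▸ hLli.2 e heL p
    -- K ∩ L is a left ideal contained in L, hence equals L
    have hKL : IsLI (K ∩ L) := by
      obtain ⟨k, hk⟩ := hKne
      obtain ⟨l, hl⟩ := hLli.1
      refine ⟨⟨k * l, (hKid k hk l).2, hLli.2 l hl k⟩, ?_⟩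
      rintro x ⟨hxK, hxL⟩ q
      exact ⟨(hKid x hxK q).1, hLli.2 x hxL q⟩
    have : K ∩ L = L := hLmin _ hKL Set.inter_subset_right
    exact (this.symm ▸ hpL : p ∈ K ∩ L).1
  · -- p ∈ K ⟹ minimal
    intro hpK q hq hqp hpq
    -- M = L ∪ LT is a two-sided ideal, so K ⊆ M and p ∈ M
    set M : Set T := L ∪ {x | ∃ l ∈ L, ∃ t : T, x = l * t} with hM
    have hMid : IsTwoSidedIdeal M := by
      constructor
      · exact hLli.1.mono Set.subset_union_left
      · rintro x (hxL | ⟨l, hl, t, rfl⟩) r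
        · exact ⟨Or.inl (hLli.2 x hxL r), Or.inr ⟨x, hxL, r, rfl⟩⟩
        · exact ⟨Or.inr ⟨r * l, hLli.2 l hl r, t, (mul_assoc r l t).symm⟩,
            Or.inr ⟨l, hl, t * r, mul_assoc l t r⟩⟩
    have hpM : p ∈ M := hKmin M hMid hpK
    -- p lies in a minimal left ideal L₀
    obtain ⟨L₀, hL₀li, hL₀min, hpL₀⟩ :
        ∃ L₀ : Set T, IsLI L₀ ∧ (∀ J : Set T, IsLI J → J ⊆ L₀ → J = L₀) ∧ p ∈ L₀ := by
      rcases hpM with hpL | ⟨l, hl, t, rfl⟩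
      · exact ⟨L, hLli, hLmin, hpL⟩
      · obtain ⟨h1, h2⟩ := min_left_ideal_smul L hLli hLmin t
        exact ⟨_, h1, h2, ⟨l, hl, rfl⟩⟩
    -- Tq is a left ideal contained in L₀, hence equals L₀, so p = t * q for some t
    have hqL₀ : q ∈ L₀ := hqp ▸ hL₀li.2 p hpL₀ q
    have hTq : IsLI ((fun r : T => r * q) '' Set.univ) := by
      refine ⟨⟨q * q, q, Set.mem_univ _, rfl⟩, ?_⟩
      rintro _ ⟨t, -, rfl⟩ r
      exact ⟨r * t, Set.mem_univ _, mul_assoc r t q⟩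
    have hTqL₀ : ((fun r : T => r * q) '' Set.univ) ⊆ L₀ := by
      rintro _ ⟨t, -, rfl⟩
      exact hL₀li.2 q hqL₀ t
    have hEq := hL₀min _ hTq hTqL₀
    have : p ∈ (fun r : T => r * q) '' Set.univ := hEq.symm ▸ hpL₀
    obtain ⟨t, -, htq⟩ := this
    simp only at htq
    calc q = p * q := hpq.symm
    _ = (t * q) * q := by rw [htq]
    _ = t * (q * q) := mul_assoc t q q
    _ = t * q := by rw [hq]
    _ = p := htq
end

section
/- For a sequence ⟨x_n⟩ in (N,+), the following are equivalent: (a) ⋂_{m≥1} cl FS(⟨x_n⟩_{n≥m}) ∩ J(N) ≠ ∅ (i.e., ⟨x_n⟩ is an almost minimal sequence); (b) FS(⟨x_n⟩) is a J-set; (c) there is an idempotent in ⋂_{m≥1} cl FS(⟨x_n⟩_{n≥m}) ∩ J(N). -/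
attribute [local instance] Ultrafilter.addSemigroup

/-- `FSfrom x m` : finite sums of `x` over nonempty finite index sets contained
in `{m, m+1, ...}`. -/
def FSfrom (x : ℕ → ℕ) (m : ℕ) : Set ℕ :=
  {s | ∃ F : Finset ℕ, F.Nonempty ∧ (∀ n ∈ F, m ≤ n) ∧ s = ∑ n ∈ F, x n}

/-- `A` is a J-set in `(ℕ, +)`. -/
def IsJSet (A : Set ℕ) : Prop :=
  ∀ F : Finset (ℕ → ℕ), ∃ (a : ℕ) (H : Finset ℕ), H.Nonempty ∧
    ∀ f ∈ F, a + ∑ t ∈ H, f t ∈ A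

/-- `J(ℕ)`: ultrafilters on `ℕ` all of whose members are J-sets. -/
def JN : Set (Ultrafilter ℕ) :=
  {p | ∀ A ∈ p, IsJSet A}

/-! ### Basic lemmas -/

lemma FSfrom_antitone (x : ℕ → ℕ) {m m' : ℕ} (h : m ≤ m') :
    FSfrom x m' ⊆ FSfrom x m := by
  rintro s ⟨F, hF, hge, rfl⟩
  exact ⟨F, hF, fun n hn => h.trans (hge n hn), rfl⟩

lemma isJSet_mono {A B : Set ℕ} (h : A ⊆ B) (hA : IsJSet A) : IsJSet B := by
  intro F
  obtain ⟨a, H, hH, hmem⟩ := hA F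
  exact ⟨a, H, hH, fun f hf => h (hmem f hf)⟩

lemma not_isJSet_empty : ¬ IsJSet (∅ : Set ℕ) := by
  intro h
  obtain ⟨a, H, hH, hmem⟩ := h {fun _ => 0}
  exact absurd (hmem _ (Finset.mem_singleton_self _)) (Set.notMem_empty _)

lemma not_isJSet_singleton (c : ℕ) : ¬ IsJSet ({c} : Set ℕ) := by
  intro h
  obtain ⟨a, H, hH, hmem⟩ := h {fun _ => c + 1}
  have h1 := hmem _ (Finset.mem_singleton_self _)
  rw [Set.mem_singleton_iff, Finset.sum_const, smul_eq_mul] at h1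
  have h3 : 1 ≤ H.card := Finset.card_pos.mpr hH
  have h4 : c + 1 ≤ H.card * (c + 1) := Nat.le_mul_of_pos_left _ h3
  omega

lemma isJSet_of_image_add {c : ℕ} {A : Set ℕ} (h : IsJSet ((c + ·) '' A)) :
    IsJSet A := by
  classical
  intro F
  obtain ⟨a, H, hH, hmem⟩ := h (F.image fun f => fun t => c + f t)
  refine ⟨a + (H.card - 1) * c, H, hH, fun f hf => ?_⟩
  obtain ⟨b, hb, heq⟩ := hmem _ (Finset.mem_image_of_mem _ hf)
  have hsum : ∑ t ∈ H, (c + f t) = H.card * c + ∑ t ∈ H, f t := by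
    rw [Finset.sum_add_distrib, Finset.sum_const, smul_eq_mul]
  have hcard : 1 ≤ H.card := Finset.card_pos.mpr hH
  have hc : H.card * c = (H.card - 1) * c + c := by
    obtain ⟨k, hk⟩ := Nat.exists_eq_add_of_le hcard
    rw [hk, Nat.add_sub_cancel_left]
    ring
  rw [hsum, hc] at heq
  set S := ∑ t ∈ H, f t with hS
  set d2 := (H.card - 1) * c with hd2
  have heq' : c + b = a + (d2 + c + S) := heq
  have hb' : b = a + d2 + S := by omega
  exact hb' ▸ hb

/-! ### Partition regularity of J-sets, via the Hales–Jewett theorem -/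

open Combinatorics in
set_option maxHeartbeats 1000000 in
lemma jset_cover_aux {A : Set ℕ} (hA : IsJSet A) {ι : Type} [Fintype ι]
    (C : ι → Set ℕ) (hsub : A ⊆ ⋃ i, C i) (F : Finset (ℕ → ℕ)) (hF : F.Nonempty) :
    ∃ (i : ι) (a : ℕ) (H : Finset ℕ), H.Nonempty ∧
      ∀ f ∈ F, a + ∑ t ∈ H, f t ∈ C i := by
  classical
  obtain ⟨W, hWfin, hHJ⟩ := Line.exists_mono_in_high_dimension (↥F) ι
  haveI := hWfin
  let e : W → ℕ := fun j => ((Fintype.equivFin W) j : ℕ)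
  have he : Function.Injective e := fun a b hab =>
    (Fintype.equivFin W).injective (Fin.val_injective hab)
  let g : (W → ↥F) → ℕ → ℕ := fun w t => ∑ j : W, (w j : ℕ → ℕ) (Nat.pair (e j) t)
  obtain ⟨a, H, hH, hmem⟩ := hA ((Finset.univ : Finset (W → ↥F)).image g)
  have hval : ∀ w : W → ↥F, ∃ i, a + ∑ t ∈ H, g w t ∈ C i := fun w =>
    Set.mem_iUnion.mp (hsub (hmem _ (Finset.mem_image_of_mem g (Finset.mem_univ w))))
  choose col hcol using hval
  obtain ⟨l, i, hl⟩ := hHJ col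
  obtain ⟨j₀, hj₀⟩ := l.proper
  have hd : (↥F) := ⟨hF.choose, hF.choose_spec⟩
  obtain ⟨t₀, ht₀⟩ := hH
  refine ⟨i, a + ∑ j ∈ Finset.univ.filter (fun j : W => ¬ l.idxFun j = none),
      ∑ t ∈ H, ((l.idxFun j).getD hd : ℕ → ℕ) (Nat.pair (e j) t),
    ((Finset.univ.filter (fun j : W => l.idxFun j = none)) ×ˢ H).image
      (fun pr => Nat.pair (e pr.1) pr.2), ?_, ?_⟩
  · refine ⟨Nat.pair (e j₀) t₀, Finset.mem_image.mpr ⟨(j₀, t₀), ?_, rfl⟩⟩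
    rw [Finset.mem_product]
    refine ⟨?_, ht₀⟩
    simp only [Finset.mem_filter]
    exact ⟨Finset.mem_univ _, hj₀⟩
  intro f hf
  have hls : ∀ j : W, (l ⟨f, hf⟩ j : ℕ → ℕ) = ((l.idxFun j).getD (⟨f, hf⟩ : ↥F) : ℕ → ℕ) :=
    fun j => rfl
  have h1 : ∑ t ∈ H, g (l ⟨f, hf⟩) t
      = ∑ j : W, ∑ t ∈ H, ((l ⟨f, hf⟩ j : ℕ → ℕ)) (Nat.pair (e j) t) := Finset.sum_comm
  have h2 : ∑ j ∈ Finset.univ.filter (fun j : W => l.idxFun j = none),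
      ∑ t ∈ H, ((l ⟨f, hf⟩ j : ℕ → ℕ)) (Nat.pair (e j) t)
      = ∑ u ∈ ((Finset.univ.filter (fun j : W => l.idxFun j = none)) ×ˢ H).image
          (fun pr => Nat.pair (e pr.1) pr.2), f u := by
    have hinj : ∀ pr ∈ (Finset.univ.filter (fun j : W => l.idxFun j = none)) ×ˢ H,
        ∀ qr ∈ (Finset.univ.filter (fun j : W => l.idxFun j = none)) ×ˢ H,
        Nat.pair (e pr.1) pr.2 = Nat.pair (e qr.1) qr.2 → pr = qr := by
      rintro ⟨j, t⟩ _ ⟨j', t'⟩ _ hpq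
      obtain ⟨hj, ht⟩ := Nat.pair_eq_pair.mp hpq
      exact Prod.ext (he hj) ht
    rw [Finset.sum_image hinj, Finset.sum_product]
    refine Finset.sum_congr rfl fun j hj => Finset.sum_congr rfl fun t ht => ?_
    have hjn : l.idxFun j = none := (Finset.mem_filter.mp hj).2
    rw [hls j, hjn]
    rfl
  have h3 : ∑ j ∈ Finset.univ.filter (fun j : W => ¬ l.idxFun j = none),
      ∑ t ∈ H, ((l ⟨f, hf⟩ j : ℕ → ℕ)) (Nat.pair (e j) t)
      = ∑ j ∈ Finset.univ.filter (fun j : W => ¬ l.idxFun j = none),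
      ∑ t ∈ H, ((l.idxFun j).getD hd : ℕ → ℕ) (Nat.pair (e j) t) := by
    refine Finset.sum_congr rfl fun j hj => Finset.sum_congr rfl fun t ht => ?_
    have hj' : ¬ l.idxFun j = none := (Finset.mem_filter.mp hj).2
    obtain ⟨c, hc⟩ := Option.ne_none_iff_exists'.mp hj'
    rw [hls j, hc]
    rfl
  have hsplit : ∑ j ∈ Finset.univ.filter (fun j : W => l.idxFun j = none),
      (∑ t ∈ H, ((l ⟨f, hf⟩ j : ℕ → ℕ)) (Nat.pair (e j) t))
      + ∑ j ∈ Finset.univ.filter (fun j : W => ¬ l.idxFun j = none),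
      (∑ t ∈ H, ((l ⟨f, hf⟩ j : ℕ → ℕ)) (Nat.pair (e j) t))
      = ∑ j : W, ∑ t ∈ H, ((l ⟨f, hf⟩ j : ℕ → ℕ)) (Nat.pair (e j) t) :=
    Finset.sum_filter_add_sum_filter_not Finset.univ _ _
  have hC := hcol (l ⟨f, hf⟩)
  rw [hl ⟨f, hf⟩] at hC
  have key : a + ∑ t ∈ H, g (l ⟨f, hf⟩) t
      = (a + ∑ j ∈ Finset.univ.filter (fun j : W => ¬ l.idxFun j = none),
          ∑ t ∈ H, ((l.idxFun j).getD hd : ℕ → ℕ) (Nat.pair (e j) t))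
        + ∑ u ∈ ((Finset.univ.filter (fun j : W => l.idxFun j = none)) ×ˢ H).image
            (fun pr => Nat.pair (e pr.1) pr.2), f u := by
    rw [h1, ← hsplit, h2, h3]
    ring
  rw [key] at hC
  exact hC

lemma exists_isJSet_of_cover {A : Set ℕ} (hA : IsJSet A) {ι : Type} [Fintype ι]
    (C : ι → Set ℕ) (hsub : A ⊆ ⋃ i, C i) : ∃ i, IsJSet (C i) := by
  classical
  by_contra hcon
  push_neg at hcon
  have hwit : ∀ i, ∃ Fi : Finset (ℕ → ℕ), ∀ (a : ℕ) (H : Finset ℕ), H.Nonempty →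
      ∃ f ∈ Fi, a + ∑ t ∈ H, f t ∉ C i := by
    intro i
    have := hcon i
    unfold IsJSet at this
    push_neg at this
    exact this
  choose Fi hFi using hwit
  obtain ⟨i, a, H, hH, hmem⟩ := jset_cover_aux hA C hsub
    (insert (fun _ => 0) (Finset.univ.biUnion Fi)) ⟨_, Finset.mem_insert_self _ _⟩
  obtain ⟨f, hf, hnot⟩ := hFi i a H hH
  exact hnot (hmem f (Finset.mem_insert_of_mem
    (Finset.mem_biUnion.mpr ⟨i, Finset.mem_univ _, hf⟩)))

lemma isJSet_union {B C : Set ℕ} (h : IsJSet (B ∪ C)) : IsJSet B ∨ IsJSet C := by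
  have hsub : B ∪ C ⊆ ⋃ b : Bool, (bif b then B else C) := by
    rintro s (hs | hs)
    exacts [Set.mem_iUnion.mpr ⟨true, hs⟩, Set.mem_iUnion.mpr ⟨false, hs⟩]
  rcases exists_isJSet_of_cover h _ hsub with ⟨b, hb⟩
  cases b
  · exact Or.inr hb
  · exact Or.inl hb

/-! ### Each `FSfrom x m` is a J-set -/

lemma isJSet_FSfrom {x : ℕ → ℕ} (h : IsJSet (FSfrom x 0)) (m : ℕ) :
    IsJSet (FSfrom x m) := by
  classical
  let C : ↥((Finset.range m).powerset) → Set ℕ := fun G =>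
    ({∑ n ∈ (G : Finset ℕ), x n} : Set ℕ) ∪
      ((∑ n ∈ (G : Finset ℕ), x n + ·) '' FSfrom x m)
  have hcover : FSfrom x 0 ⊆ ⋃ G, C G := by
    rintro s ⟨Fs, hne, -, rfl⟩
    have hGmem : Fs.filter (· < m) ∈ (Finset.range m).powerset :=
      Finset.mem_powerset.mpr fun n hn => Finset.mem_range.mpr (Finset.mem_filter.mp hn).2
    refine Set.mem_iUnion.mpr ⟨⟨_, hGmem⟩, ?_⟩
    have hsplit : ∑ n ∈ Fs.filter (· < m), x n
        + ∑ n ∈ Fs.filter (fun n => ¬ n < m), x n = ∑ n ∈ Fs, x n :=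
      Finset.sum_filter_add_sum_filter_not Fs (· < m) x
    by_cases hF' : (Fs.filter (fun n => ¬ n < m)).Nonempty
    · exact Or.inr ⟨∑ n ∈ Fs.filter (fun n => ¬ n < m), x n,
        ⟨Fs.filter (fun n => ¬ n < m), hF',
          fun n hn => le_of_not_gt (Finset.mem_filter.mp hn).2, rfl⟩, hsplit⟩
    · left
      rw [Finset.not_nonempty_iff_eq_empty] at hF'
      rw [hF', Finset.sum_empty, add_zero] at hsplit
      exact hsplit.symm
  obtain ⟨G, hG⟩ := exists_isJSet_of_cover h C hcover
  rcases isJSet_union hG with h1 | h2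
  · exact absurd h1 (not_isJSet_singleton _)
  · exact isJSet_of_image_add h2

/-! ### Existence of an ultrafilter in `T ∩ J(ℕ)` -/

lemma exists_ultra (x : ℕ → ℕ) (h : IsJSet (FSfrom x 0)) :
    ∃ p : Ultrafilter ℕ, (∀ m, FSfrom x m ∈ p) ∧ ∀ A ∈ p, IsJSet A := by
  classical
  have hFS : ∀ m, IsJSet (FSfrom x m) := isJSet_FSfrom h
  let 𝒢 : Filter ℕ :=
    { sets := {B | ∃ m, ¬ IsJSet (FSfrom x m \ B)}
      univ_sets := ⟨0, by rw [Set.diff_univ]; exact not_isJSet_empty⟩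
      sets_of_superset := by
        rintro B B' ⟨m, hm⟩ hBB'
        exact ⟨m, fun hJ => hm (isJSet_mono (Set.diff_subset_diff_right hBB') hJ)⟩
      inter_sets := by
        rintro B1 B2 ⟨m1, h1⟩ ⟨m2, h2⟩
        refine ⟨max m1 m2, fun hJ => ?_⟩
        have hsub : FSfrom x (max m1 m2) \ (B1 ∩ B2)
            ⊆ (FSfrom x m1 \ B1) ∪ (FSfrom x m2 \ B2) := by
          rintro s ⟨hs, hns⟩
          by_cases h1' : s ∈ B1
          · exact Or.inr ⟨FSfrom_antitone x (le_max_right _ _) hs,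
              fun hb => hns ⟨h1', hb⟩⟩
          · exact Or.inl ⟨FSfrom_antitone x (le_max_left _ _) hs, h1'⟩
        rcases isJSet_union (isJSet_mono hsub hJ) with hx | hx
        exacts [h1 hx, h2 hx] }
  have hGmem : ∀ m, FSfrom x m ∈ 𝒢 := fun m =>
    ⟨m, by rw [Set.diff_self]; exact not_isJSet_empty⟩
  have hbot : (∅ : Set ℕ) ∉ 𝒢 := by
    rintro ⟨m, hm⟩
    exact hm (by rw [Set.diff_empty]; exact hFS m)
  haveI : 𝒢.NeBot := ⟨fun hb => hbot (by rw [hb]; exact Filter.mem_bot)⟩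
  refine ⟨Ultrafilter.of 𝒢, fun m => Ultrafilter.of_le 𝒢 (hGmem m), ?_⟩
  intro A hA
  have hAc : Aᶜ ∉ 𝒢 := fun hc =>
    (Ultrafilter.compl_notMem_iff.mpr hA) (Ultrafilter.of_le 𝒢 hc)
  have hJ : IsJSet (FSfrom x 0 \ Aᶜ) := by
    by_contra hcon
    exact hAc ⟨0, hcon⟩
  exact isJSet_mono (fun s hs => Set.notMem_compl_iff.mp hs.2) hJ

/-! ### Ultrafilter addition lemmas -/

lemma ultra_mem_add {A : Set ℕ} {p q : Ultrafilter ℕ} :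
    A ∈ p + q ↔ {a | {b | a + b ∈ A} ∈ q} ∈ p := Iff.rfl

/-! ### Main theorem -/

/-- Characterization of almost minimal sequences: the following are equivalent:
(a) `⋂_m cl FS(⟨x_n⟩_{n≥m}) ∩ J(ℕ) ≠ ∅`;
(b) `FS(⟨x_n⟩)` is a J-set;
(c) there is an idempotent in `⋂_m cl FS(⟨x_n⟩_{n≥m}) ∩ J(ℕ)`. -/
theorem almost_minimal_characterization (x : ℕ → ℕ) :
    (((⋂ m : ℕ, {p : Ultrafilter ℕ | FSfrom x m ∈ p}) ∩ JN).Nonempty ↔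
        IsJSet (FSfrom x 0)) ∧
      (IsJSet (FSfrom x 0) ↔
        ∃ p ∈ (⋂ m : ℕ, {p : Ultrafilter ℕ | FSfrom x m ∈ p}) ∩ JN, p + p = p) := by
  classical
  set T : Set (Ultrafilter ℕ) := ⋂ m : ℕ, {p : Ultrafilter ℕ | FSfrom x m ∈ p} with hT
  have L1 : ∀ p ∈ T ∩ JN, IsJSet (FSfrom x 0) := by
    rintro p ⟨hpT, hpJ⟩
    exact hpJ _ (Set.mem_iInter.mp hpT 0)
  have L2 : IsJSet (FSfrom x 0) → ∃ p ∈ T ∩ JN, p + p = p := by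
    intro h
    obtain ⟨p₀, hp₀m, hp₀J⟩ := exists_ultra x h
    have hp₀ : p₀ ∈ T ∩ JN := ⟨Set.mem_iInter.mpr hp₀m, hp₀J⟩
    have hTclosed : IsClosed T :=
      isClosed_iInter fun m => ultrafilter_isClosed_basic _
    have hJNclosed : IsClosed JN := by
      have hEq : JN = ⋂ (A : Set ℕ) (_ : ¬ IsJSet A), {p : Ultrafilter ℕ | Aᶜ ∈ p} := by
        ext p
        simp only [Set.mem_iInter, Set.mem_setOf_eq, JN]
        constructor
        · intro hp A hA
          rw [Ultrafilter.compl_mem_iff_notMem]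
          exact fun hmem => hA (hp A hmem)
        · intro hp A hA
          by_contra hA'
          exact (Ultrafilter.compl_mem_iff_notMem.mp (hp A hA')) hA
      rw [hEq]
      exact isClosed_iInter fun A => isClosed_iInter fun _ => ultrafilter_isClosed_basic _
    have hclosed : IsClosed (T ∩ JN) := hTclosed.inter hJNclosed
    have hTadd : ∀ p ∈ T, ∀ q ∈ T, p + q ∈ T := by
      intro p hp q hq
      refine Set.mem_iInter.mpr fun m => ?_
      have hpm : FSfrom x m ∈ p := Set.mem_iInter.mp hp m
      show FSfrom x m ∈ p + q
      rw [ultra_mem_add]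
      refine Filter.mem_of_superset hpm ?_
      rintro a ⟨Fa, hFa, hgea, rfl⟩
      have hM : FSfrom x (Fa.max' hFa + 1) ∈ q := Set.mem_iInter.mp hq _
      refine Filter.mem_of_superset hM ?_
      rintro b ⟨Fb, hFb, hgeb, rfl⟩
      have hdisj : Disjoint Fa Fb := by
        rw [Finset.disjoint_left]
        intro n hna hnb
        have h1 := Finset.le_max' Fa n hna
        have h2 := hgeb n hnb
        omega
      refine ⟨Fa ∪ Fb, hFa.mono Finset.subset_union_left, ?_, (Finset.sum_union hdisj).symm⟩
      intro n hn
      rcases Finset.mem_union.mp hn with hn | hn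
      · exact hgea n hn
      · have h1 := hgeb n hn
        have h2 := hgea _ (Fa.max'_mem hFa)
        have h3 := Finset.le_max' Fa _ (Fa.max'_mem hFa)
        omega
    have hJNadd : ∀ p ∈ JN, ∀ q ∈ JN, p + q ∈ JN := by
      intro p hp q hq A hA
      rw [ultra_mem_add] at hA
      obtain ⟨a, ha⟩ := Ultrafilter.nonempty_of_mem hA
      have hC : IsJSet {b | a + b ∈ A} := hq _ ha
      intro F
      obtain ⟨c, H, hH, hmem⟩ := hC F
      refine ⟨a + c, H, hH, fun f hf => ?_⟩
      have := hmem f hf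
      simpa [add_assoc] using this
    have hadd : ∀ p ∈ T ∩ JN, ∀ q ∈ T ∩ JN, p + q ∈ T ∩ JN := by
      rintro p ⟨hp1, hp2⟩ q ⟨hq1, hq2⟩
      exact ⟨hTadd p hp1 q hq1, hJNadd p hp2 q hq2⟩
    obtain ⟨q, hq, hidem⟩ := exists_idempotent_in_compact_add_subsemigroup
      (fun r : Ultrafilter ℕ => Ultrafilter.continuous_add_left r) (T ∩ JN)
      ⟨p₀, hp₀⟩ hclosed.isCompact hadd
    exact ⟨q, hq, hidem⟩
  refine ⟨⟨fun ⟨p, hp⟩ => L1 p hp, fun h => ?_⟩, L2, fun ⟨p, hp, _⟩ => L1 p hp⟩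
  obtain ⟨p, hp, -⟩ := L2 h
  exact ⟨p, hp⟩
end

section
/- In (N,+), if A is a J-set and t ∈ N, then −t + A = {n ∈ N : t + n ∈ A} is also a J-set (J-sets are translation invariant). -/
/-- J-sets in `(ℕ, +)` are translation invariant: if `A` is a J-set then so is
`-t + A = {n : t + n ∈ A}`. -/
theorem isJSet_translate (A : Set ℕ) (hA : IsJSet A) (t : ℕ) :
    IsJSet {n : ℕ | t + n ∈ A} := by
  intro F
  classical
  obtain ⟨a, H, hH, hmem⟩ := hA (F.image (fun f n => t + f n))
  refine ⟨a + (H.card - 1) * t, H, hH, fun f hf => ?_⟩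
  have h := hmem _ (Finset.mem_image_of_mem _ hf)
  simp only [Finset.sum_add_distrib, Finset.sum_const, smul_eq_mul] at h
  have hc : 1 ≤ H.card := Finset.one_le_card.mpr hH
  have : t + (a + (H.card - 1) * t + ∑ s ∈ H, f s)
      = a + (H.card * t + ∑ s ∈ H, f s) := by
    have : t + (H.card - 1) * t = H.card * t := by
      cases' Nat.exists_eq_add_of_le hc with k hk
      rw [hk]; simp [Nat.add_sub_cancel_left, Nat.add_mul]
    omega
  simpa [Set.mem_setOf_eq, this] using h
end

section
/- If A is a C-set in (N,+), then for every n ∈ N both nA = {n·a : a ∈ A} and n⁻¹A = {m ∈ N : n·m ∈ A} are C-sets in (N,+). -/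
attribute [local instance] Ultrafilter.addSemigroup

/-- `A` is a C-set in `(ℕ, +)`: a member of some idempotent in `J(ℕ)`. -/
def IsCSet (A : Set ℕ) : Prop :=
  ∃ p : Ultrafilter ℕ, p + p = p ∧ p ∈ JN ∧ A ∈ p

lemma mem_add_uf {U V : Ultrafilter ℕ} {s : Set ℕ} :
    s ∈ U + V ↔ {m | {m' | m + m' ∈ s} ∈ V} ∈ U := Iff.rfl

lemma IsJSet.mono {C D : Set ℕ} (h : IsJSet C) (hCD : C ⊆ D) : IsJSet D := by
  intro F
  obtain ⟨a, H, hH, hm⟩ := h F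
  exact ⟨a, H, hH, fun f hf => hCD (hm f hf)⟩

lemma map_add_uf (φ : ℕ → ℕ) (hφ : ∀ x y, φ (x + y) = φ x + φ y) (U V : Ultrafilter ℕ) :
    (U + V).map φ = U.map φ + V.map φ := by
  apply Ultrafilter.coe_injective
  apply Filter.ext
  intro s
  show φ ⁻¹' s ∈ U + V ↔ s ∈ U.map φ + V.map φ
  rw [mem_add_uf, mem_add_uf]
  have : {m | {m' | m + m' ∈ s} ∈ V.map φ} ∈ U.map φ ↔
      (φ ⁻¹' {m | {m' | m + m' ∈ s} ∈ V.map φ}) ∈ U := Ultrafilter.mem_map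
  rw [this]
  have h2 : (φ ⁻¹' {m | {m' | m + m' ∈ s} ∈ V.map φ})
      = {m | {m' | m + m' ∈ φ ⁻¹' s} ∈ V} := by
    ext m
    simp only [Set.mem_preimage, Set.mem_setOf_eq, Ultrafilter.mem_map]
    have he : (φ ⁻¹' {m' | φ m + m' ∈ s}) = {m' | m + m' ∈ φ ⁻¹' s} := by
      ext m'; simp [hφ]
    rw [he]
    exact Iff.rfl
  rw [h2]

/-- multiples of `n` belong to every additive idempotent ultrafilter -/
lemma dvd_mem_of_idem (n : ℕ) (hn : 0 < n) (p : Ultrafilter ℕ) (hpp : p + p = p) :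
    {m : ℕ | m % n = 0} ∈ p := by
  -- the pushforward along `· % n` is principal at some residue `r < n`
  have hfin : {x : ℕ | x < n} ∈ p.map (· % n) := by
    apply Ultrafilter.mem_map.mpr
    exact Filter.mem_of_superset Filter.univ_mem (fun m _ => Nat.mod_lt _ hn)
  obtain ⟨r, hr, hur⟩ := Ultrafilter.eq_pure_of_finite_mem (Set.finite_Iio n) hfin
  have hSr : {m : ℕ | m % n = r} ∈ p := by
    have h1 : ({r} : Set ℕ) ∈ p.map (· % n) := by
      rw [hur]; exact Filter.mem_pure.mpr rfl
    have := Ultrafilter.mem_map.mp h1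
    simpa [Set.preimage, Set.mem_singleton_iff] using this
  -- exploit idempotency to show r = 0
  have h2 : {m : ℕ | {m' : ℕ | (m + m') % n = r} ∈ p} ∈ p := by
    have : {m : ℕ | m % n = r} ∈ p + p := by rw [hpp]; exact hSr
    exact mem_add_uf.mp this
  obtain ⟨m, hm1, hm2⟩ := Filter.nonempty_of_mem (Filter.inter_mem h2 hSr)
  obtain ⟨m', hm'1, hm'2⟩ := Filter.nonempty_of_mem (Filter.inter_mem hm1 hSr)
  have key : (r + r) % n = r := by
    have : (m + m') % n = (m % n + m' % n) % n := Nat.add_mod m m' n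
    rw [hm2, hm'2] at this
    rw [← this]
    exact hm'1
  have hr0 : r = 0 := by
    rcases Nat.lt_or_ge (r + r) n with h | h
    · rw [Nat.mod_eq_of_lt h] at key; omega
    · have hlt : r + r - n < n := by
        have : r < n := hr
        omega
      rw [Nat.mod_eq_sub_mod h, Nat.mod_eq_of_lt hlt] at key
      have : r < n := hr
      omega
  have : {m : ℕ | m % n = r} = {m : ℕ | m % n = 0} := by rw [hr0]
  rw [← this]; exact hSr

lemma isJSet_mul (n : ℕ) (hn : 0 < n) (C : Set ℕ) (hC : IsJSet C) :
    IsJSet {m : ℕ | ∃ c ∈ C, m = n * c} := by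
  classical
  intro F
  obtain ⟨v, hv⟩ := Finite.exists_infinite_fiber
    (fun s : ℕ => fun f : {f // f ∈ F} => (⟨f.1 s % n, Nat.mod_lt _ hn⟩ : Fin n))
  set S := (fun s : ℕ => fun f : {f // f ∈ F} =>
    (⟨f.1 s % n, Nat.mod_lt _ hn⟩ : Fin n)) ⁻¹' {v} with hSdef
  have hS : S.Infinite := Set.infinite_coe_iff.mp hv
  set ψ : ℕ → ℕ := fun k => (Set.Infinite.natEmbedding S hS k : ℕ) with hψdef
  have hψinj : Function.Injective ψ := fun a b hab =>
    (Set.Infinite.natEmbedding S hS).injective (Subtype.ext hab)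
  have hψS : ∀ k, ψ k ∈ S := fun k => (Set.Infinite.natEmbedding S hS k).2
  have hres : ∀ f (hf : f ∈ F) k, f (ψ k) % n = (v ⟨f, hf⟩ : ℕ) := by
    intro f hf k
    have h1 := hψS k
    rw [hSdef] at h1
    have h2 := congrFun (Set.mem_singleton_iff.mp (Set.mem_preimage.mp h1)) ⟨f, hf⟩
    exact congrArg Fin.val h2
  set g : (ℕ → ℕ) → ℕ → ℕ :=
    fun f t => (∑ j ∈ Finset.range n, f (ψ (n * t + j))) / n with hgdef
  have hdvd : ∀ f (hf : f ∈ F) t, n ∣ ∑ j ∈ Finset.range n, f (ψ (n * t + j)) := by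
    intro f hf t
    apply Nat.dvd_of_mod_eq_zero
    rw [Finset.sum_nat_mod]
    have he : ∀ j ∈ Finset.range n, f (ψ (n * t + j)) % n = (v ⟨f, hf⟩ : ℕ) :=
      fun j _ => hres f hf _
    rw [Finset.sum_congr rfl he, Finset.sum_const, Finset.card_range, smul_eq_mul,
      Nat.mul_mod_right]
  obtain ⟨a', H', hH', hmem⟩ := hC (F.image g)
  refine ⟨n * a', H'.biUnion (fun t => (Finset.range n).image fun j => ψ (n * t + j)), ?_, ?_⟩
  · obtain ⟨t, ht⟩ := hH'
    exact ⟨ψ (n * t + 0), Finset.mem_biUnion.mpr ⟨t, ht,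
      Finset.mem_image.mpr ⟨0, Finset.mem_range.mpr hn, rfl⟩⟩⟩
  · intro f hf
    have hdisj : (↑H' : Set ℕ).PairwiseDisjoint
        (fun t => (Finset.range n).image fun j => ψ (n * t + j)) := by
      intro t₁ _ t₂ _ hne
      apply Finset.disjoint_left.mpr
      intro x hx1 hx2
      obtain ⟨j₁, hj₁, he₁⟩ := Finset.mem_image.mp hx1
      obtain ⟨j₂, hj₂, he₂⟩ := Finset.mem_image.mp hx2
      have heq : n * t₁ + j₁ = n * t₂ + j₂ := hψinj (he₁.trans he₂.symm)
      have hj₁' := Finset.mem_range.mp hj₁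
      have hj₂' := Finset.mem_range.mp hj₂
      apply hne
      have h1 : (n * t₁ + j₁) / n = t₁ := by
        rw [Nat.mul_add_div hn, Nat.div_eq_of_lt hj₁', Nat.add_zero]
      have h2 : (n * t₂ + j₂) / n = t₂ := by
        rw [Nat.mul_add_div hn, Nat.div_eq_of_lt hj₂', Nat.add_zero]
      rw [← h1, ← h2, heq]
    have hsum : ∑ s ∈ H'.biUnion (fun t => (Finset.range n).image fun j => ψ (n * t + j)), f s
        = ∑ t ∈ H', ∑ j ∈ Finset.range n, f (ψ (n * t + j)) := by
      rw [Finset.sum_biUnion hdisj]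
      apply Finset.sum_congr rfl
      intro t _
      rw [Finset.sum_image]
      intro j₁ hj₁ j₂ hj₂ he
      have := hψinj he
      omega
    have hginner : ∀ t, n * g f t = ∑ j ∈ Finset.range n, f (ψ (n * t + j)) :=
      fun t => Nat.mul_div_cancel' (hdvd f hf t)
    refine ⟨a' + ∑ t ∈ H', g f t, hmem (g f) (Finset.mem_image_of_mem g hf), ?_⟩
    rw [hsum, Nat.mul_add, Finset.mul_sum]
    congr 1
    apply Finset.sum_congr rfl
    intro t _
    exact (hginner t).symm

lemma isJSet_of_mul (n : ℕ) (hn : 0 < n) (B : Set ℕ)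
    (h : IsJSet {m : ℕ | ∃ b ∈ B, m = n * b}) : IsJSet B := by
  classical
  intro F
  rcases F.eq_empty_or_nonempty with rfl | ⟨f₀, hf₀⟩
  · exact ⟨0, {0}, ⟨0, Finset.mem_singleton_self 0⟩, by simp⟩
  obtain ⟨a, H, hH, hmem⟩ := h (F.image fun f t => n * f t)
  obtain ⟨b₀, hb₀, he₀⟩ := hmem _ (Finset.mem_image_of_mem _ hf₀)
  rw [← Finset.mul_sum] at he₀
  have hdvd : n ∣ a := by
    have ha : a = n * b₀ - n * ∑ t ∈ H, f₀ t := Nat.eq_sub_of_add_eq he₀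
    rw [ha]
    exact Nat.dvd_sub (Dvd.intro b₀ rfl) (Dvd.intro _ rfl)
  obtain ⟨a', rfl⟩ := hdvd
  refine ⟨a', H, hH, fun f hf => ?_⟩
  obtain ⟨b, hb, he⟩ := hmem _ (Finset.mem_image_of_mem _ hf)
  rw [← Finset.mul_sum] at he
  have : n * (a' + ∑ t ∈ H, f t) = n * b := by rw [Nat.mul_add]; exact he
  have := Nat.eq_of_mul_eq_mul_left hn this
  rw [this]; exact hb

/-- If `A` is a C-set in `(ℕ,+)`, then for every `n` both `nA = {n·a : a ∈ A}`
and `n⁻¹A = {m : n·m ∈ A}` are C-sets. -/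
theorem cSet_mul_and_div (A : Set ℕ) (hA : IsCSet A) (n : ℕ) (hn : 0 < n) :
    IsCSet {m : ℕ | ∃ a ∈ A, m = n * a} ∧ IsCSet {m : ℕ | n * m ∈ A} := by
  obtain ⟨p, hpp, hpJ, hAp⟩ := hA
  have hφ : ∀ x y : ℕ, n * (x + y) = n * x + n * y := fun x y => Nat.mul_add n x y
  have hφinj : Function.Injective (fun m : ℕ => n * m) :=
    fun a b h => Nat.eq_of_mul_eq_mul_left hn h
  constructor
  · -- `nA` is a C-set, witnessed by the pushforward of `p` along `m ↦ n * m`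
    refine ⟨p.map (fun m => n * m), ?_, ?_, ?_⟩
    · rw [← map_add_uf (fun m => n * m) hφ, hpp]
    · intro B hB
      have h1 : (fun m => n * m) ⁻¹' B ∈ p := Ultrafilter.mem_map.mp hB
      have h2 := isJSet_mul n hn _ (hpJ _ h1)
      exact h2.mono (by rintro m ⟨c, hc, rfl⟩; exact hc)
    · exact Ultrafilter.mem_map.mpr
        (Filter.mem_of_superset hAp (fun a ha => ⟨a, ha, rfl⟩))
  · -- `n⁻¹A` is a C-set, witnessed by the pushforward of `p` along `m ↦ m / n`
    have hnN : {m : ℕ | m % n = 0} ∈ p := dvd_mem_of_idem n hn p hpp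
    set r := p.map (fun m => m / n) with hrdef
    have hmapr : r.map (fun m => n * m) = p := by
      apply Ultrafilter.coe_injective
      apply Filter.ext
      intro s
      have hmem : s ∈ r.map (fun m => n * m) ↔ {m : ℕ | n * (m / n) ∈ s} ∈ p :=
        Iff.rfl
      rw [show (s ∈ (↑(r.map fun m => n * m) : Filter ℕ)) ↔ s ∈ r.map (fun m => n * m) from
        Iff.rfl, hmem]
      constructor
      · intro h
        apply Filter.mem_of_superset (Filter.inter_mem h hnN)
        rintro m ⟨h1, h2⟩
        have h1' : n * (m / n) ∈ s := h1
        rwa [Nat.mul_div_cancel' (Nat.dvd_of_mod_eq_zero h2)] at h1'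
      · intro h
        apply Filter.mem_of_superset (Filter.inter_mem h hnN)
        rintro m ⟨h1, h2⟩
        show n * (m / n) ∈ s
        rwa [Nat.mul_div_cancel' (Nat.dvd_of_mod_eq_zero h2)]
    refine ⟨r, ?_, ?_, ?_⟩
    · -- idempotency, via injectivity of the pushforward along an injective map
      have hmap : (r + r).map (fun m => n * m) = r.map (fun m => n * m) := by
        rw [map_add_uf _ hφ, hmapr, hpp]
      have : (↑((r + r).map fun m => n * m) : Filter ℕ) = ↑(r.map fun m => n * m) := by
        rw [hmap]
      rw [Ultrafilter.coe_map, Ultrafilter.coe_map] at this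
      exact Ultrafilter.coe_injective (Filter.map_injective hφinj this)
    · intro B hB
      have h1 : (fun m => m / n) ⁻¹' B ∈ p := Ultrafilter.mem_map.mp hB
      have h2 : (((fun m => m / n) ⁻¹' B) ∩ {m : ℕ | m % n = 0}) ∈ p :=
        Filter.inter_mem h1 hnN
      have h3 : IsJSet (((fun m => m / n) ⁻¹' B) ∩ {m : ℕ | m % n = 0}) := hpJ _ h2
      apply isJSet_of_mul n hn
      apply h3.mono
      rintro m ⟨h4, h5⟩
      exact ⟨m / n, h4, (Nat.mul_div_cancel' (Nat.dvd_of_mod_eq_zero h5)).symm⟩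
    · apply Ultrafilter.mem_map.mpr
      apply Filter.mem_of_superset (Filter.inter_mem hAp hnN)
      rintro m ⟨h1, h2⟩
      show n * (m / n) ∈ A
      rwa [Nat.mul_div_cancel' (Nat.dvd_of_mod_eq_zero h2)]
end

section
/- If A is a C* set in (N,+), then for every n ∈ N the set n⁻¹A = {m ∈ N : n·m ∈ A} is also a C* set. -/
attribute [local instance] Ultrafilter.addSemigroup

/-- `A` is a C* set in `(ℕ, +)`: a member of every idempotent in `J(ℕ)`. -/
def IsCStarSet (A : Set ℕ) : Prop :=
  ∀ p : Ultrafilter ℕ, p + p = p → p ∈ JN → A ∈ p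

/-!
Multiplication by `n` is an additive homomorphism, so it pushes an idempotent ultrafilter `p`
forward to an idempotent `q = n·p`, and `n⁻¹A ∈ p` iff `A ∈ q`. It remains to see that `q` lies in
`J(ℕ)`, i.e. that `A` is a J-set whenever `n⁻¹A` is. Given finitely many `f`, choose (pigeonhole on
the residues mod `n` of the partial sums) block boundaries `m₀ < m₁ < ⋯` at which all these residues
agree; then every block sum `∑_{m_t ≤ s < m_{t+1}} f s` is `n` times a natural number, and the J-set
property of `n⁻¹A` applied to these quotients yields the required `a` and `H` for `A`.
-/

open Finset Filter

attribute [local instance] Ultrafilter.add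

theorem Ultrafilter.map_add {M N : Type*} [Add M] [Add N] (f : M →ₙ+ N) (U V : Ultrafilter M) :
    map f (U + V) = map f U + map f V :=
  coe_inj.mp <| Filter.ext' fun r => by
    simp only [eventually_add, coe_map, eventually_map, _root_.map_add]

theorem exists_strictMono_forall_eq_of_finite {α : Type*} [Finite α] (V : ℕ → α) :
    ∃ φ : ℕ → ℕ, StrictMono φ ∧ ∃ v, ∀ t, V (φ t) = v := by
  obtain ⟨v, hv⟩ := Finite.exists_infinite_fiber V
  have hfreq : ∃ᶠ t in atTop, V t = v :=
    Nat.frequently_atTop_iff_infinite.mpr (Set.infinite_coe_iff.mp hv)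
  obtain ⟨φ, hφ, hφv⟩ := extraction_of_frequently_atTop hfreq
  exact ⟨φ, hφ, v, hφv⟩

theorem sum_biUnion_Ico_of_monotone {M : Type*} [AddCommMonoid M] {m : ℕ → ℕ} (hm : Monotone m)
    (H : Finset ℕ) (f : ℕ → M) :
    ∑ s ∈ H.biUnion (fun t => Ico (m t) (m (t + 1))), f s =
      ∑ t ∈ H, ∑ s ∈ Ico (m t) (m (t + 1)), f s := by
  refine sum_biUnion fun a _ b _ hab => ?_
  simpa [← disjoint_coe] using hm.pairwise_disjoint_on_Ico_succ hab

theorem exists_strictMono_dvd_sum_Ico {ι : Type*} [Finite ι] (f : ι → ℕ → ℕ) (n : ℕ) [NeZero n] :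
    ∃ m : ℕ → ℕ, StrictMono m ∧ ∀ i t, n ∣ ∑ s ∈ Ico (m t) (m (t + 1)), f i s := by
  obtain ⟨m, hm, v, hv⟩ := exists_strictMono_forall_eq_of_finite
    fun k i => ∑ s ∈ range k, (f i s : ZMod n)
  refine ⟨m, hm, fun i t => ?_⟩
  rw [← ZMod.natCast_eq_zero_iff, Nat.cast_sum,
    sum_Ico_eq_sub _ (hm.monotone t.le_succ), sub_eq_zero]
  exact (congrFun (hv (t + 1)) i).trans (congrFun (hv t) i).symm

theorem IsJSet.of_preimage_mul {A : Set ℕ} {n : ℕ} (hn : n ≠ 0) (h : IsJSet {m | n * m ∈ A}) :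
    IsJSet A := by
  classical
  have : NeZero n := ⟨hn⟩
  intro F
  obtain ⟨m, hm, hdvd⟩ := exists_strictMono_dvd_sum_Ico (fun f : F => f.1) n
  let block : (ℕ → ℕ) → ℕ → ℕ := fun f t => (∑ s ∈ Ico (m t) (m (t + 1)), f s) / n
  obtain ⟨a, H, ⟨t, ht⟩, hH⟩ := h (F.image block)
  refine ⟨n * a, H.biUnion fun t => Ico (m t) (m (t + 1)),
    ⟨m t, mem_biUnion.mpr ⟨t, ht, left_mem_Ico.mpr (hm t.lt_succ_self)⟩⟩, fun f hf => ?_⟩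
  have hblock : ∀ t, ∑ s ∈ Ico (m t) (m (t + 1)), f s = n * block f t := fun t =>
    (Nat.mul_div_cancel' (hdvd ⟨f, hf⟩ t)).symm
  rw [sum_biUnion_Ico_of_monotone hm.monotone, sum_congr rfl fun t _ => hblock t, ← mul_sum,
    ← mul_add]
  exact hH (block f) (mem_image_of_mem block hf)

/-- If `A` is a C* set in `(ℕ,+)` then so is `n⁻¹A = {m : n·m ∈ A}` for every `n`. -/
theorem cStarSet_div (A : Set ℕ) (hA : IsCStarSet A) (n : ℕ) (hn : 0 < n) :
    IsCStarSet {m : ℕ | n * m ∈ A} := by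
  intro p hp hpJ
  let q := Ultrafilter.map (AddHom.mulLeft n) p
  have hqq : q + q = q := by rw [← Ultrafilter.map_add, hp]
  have hqJ : q ∈ JN := fun s hs => (hpJ _ hs).of_preimage_mul hn.ne'
  exact hA q hqq hqJ
end
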